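/- arXiv:0907.3086 — 2 statements merged into one kernel-verified Lean document; each statement's English description precedes it below -/
import Mathlib

section
/- Let p and q be odd positive integers. If a_1, …, a_m is a cycle of T_{p,q} of length m in which not all the a_i are equal, then p^m < 2^{S_m} < (p + q/a_min)^m. -/
/-- The generalized odd-step map: `T p q x = (px+q)/2^{v₂(px+q)}`. -/
def T (p q x : ℕ) : ℕ := (p * x + q) / 2 ^ (padicValNat 2 (p * x + q))

/-!
Dividing out the powers of two, `2^{k_i} a_{i+1} = p a_i + q`; multiplying around the cycle, the
product of the `a_i` cancels and `2^{S_m} = ∏ (p + q / a_i)`. Every factor lies strictly above `p`,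
and at most `p + q / a_min`, with strict inequality for any `a_i > a_min`, which exists since the
cycle is not constant.
-/

open Finset

theorem two_pow_padicValNat_mul_T (p q x : ℕ) :
    2 ^ padicValNat 2 (p * x + q) * T p q x = p * x + q :=
  Nat.mul_div_cancel' pow_padicValNat_dvd

theorem T_pos {p q : ℕ} (hq : 0 < q) (x : ℕ) : 0 < T p q x :=
  Nat.pos_of_mul_pos_left <| (two_pow_padicValNat_mul_T p q x).symm ▸ Nat.add_pos_right _ hq

theorem two_pow_sum_mul_prod_T (p q : ℕ) (s : Finset ℕ) (a : ℕ → ℕ) :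
    2 ^ (∑ i ∈ s, padicValNat 2 (p * a i + q)) * ∏ i ∈ s, T p q (a i) =
      ∏ i ∈ s, (p * a i + q) := by
  rw [← prod_pow_eq_pow_sum, ← prod_mul_distrib]
  exact prod_congr rfl fun i _ => two_pow_padicValNat_mul_T p q (a i)

theorem prod_Icc_eq_of_cycle {M : Type*} [CommMonoid M] {m : ℕ} (hm : 1 ≤ m) (f g : ℕ → M)
    (hstep : ∀ i, 1 ≤ i → i < m → g i = f (i + 1)) (hloop : g m = f 1) :
    ∏ i ∈ Icc 1 m, g i = ∏ i ∈ Icc 1 m, f i := by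
  have hshift : ∏ i ∈ Ico 1 m, g i = ∏ i ∈ Ico 2 (m + 1), f i := by
    rw [prod_congr rfl fun i hi => hstep i (mem_Ico.1 hi).1 (mem_Ico.1 hi).2]
    exact prod_Ico_add' f 1 m 1
  rw [← Ico_add_one_right_eq_Icc, prod_Ico_succ_top hm, hshift, hloop, mul_comm,
    prod_eq_prod_Ico_succ_bot (by omega : 1 < m + 1)]

theorem prod_add_div_eq {ι : Type*} (s : Finset ι) (p q : ℝ) {a : ι → ℝ}
    (ha : ∀ i ∈ s, a i ≠ 0) :
    ∏ i ∈ s, (p + q / a i) = (∏ i ∈ s, (p * a i + q)) / ∏ i ∈ s, a i := by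
  rw [← prod_div_distrib]
  exact prod_congr rfl fun i hi => by field_simp [ha i hi]

theorem pow_card_lt_prod_add_div {ι : Type*} {s : Finset ι} (hs : s.Nonempty) {p q : ℝ}
    (hp : 0 < p) (hq : 0 < q) {a : ι → ℝ} (ha : ∀ i ∈ s, 0 < a i) :
    p ^ s.card < ∏ i ∈ s, (p + q / a i) := by
  rw [← prod_const]
  exact prod_lt_prod_of_nonempty (fun _ _ => hp)
    (fun i hi => lt_add_of_pos_right p (div_pos hq (ha i hi))) hs

theorem prod_add_div_lt_pow_card {ι : Type*} {s : Finset ι} {p q b : ℝ} (hp : 0 ≤ p)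
    (hq : 0 < q) (hb : 0 < b) {a : ι → ℝ} (hle : ∀ i ∈ s, b ≤ a i) (hlt : ∃ i ∈ s, b < a i) :
    ∏ i ∈ s, (p + q / a i) < (p + q / b) ^ s.card := by
  rw [← prod_const]
  refine prod_lt_prod (fun i hi => ?_) (fun i hi => ?_) ?_
  · have := div_pos hq (hb.trans_le (hle i hi))
    positivity
  · gcongr
    exact hle i hi
  · obtain ⟨i, hi, hbi⟩ := hlt
    exact ⟨i, hi, by gcongr⟩

theorem Finset.exists_inf'_lt_of_ne {ι α : Type*} [LinearOrder α] {s : Finset ι}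
    (hs : s.Nonempty) {f : ι → α} (h : ∃ i ∈ s, ∃ j ∈ s, f i ≠ f j) :
    ∃ i ∈ s, s.inf' hs f < f i := by
  obtain ⟨i, hi, j, hj, hij⟩ := h
  rcases hij.lt_or_gt with hlt | hlt
  · exact ⟨j, hj, (inf'_le f hi).trans_lt hlt⟩
  · exact ⟨i, hi, (inf'_le f hj).trans_lt hlt⟩

theorem stmt_15_general (p q : ℕ) (hp : 0 < p) (hq : 0 < q)
    (m : ℕ) (hm : 1 ≤ m) (a : ℕ → ℕ)
    (hstep : ∀ i, 1 ≤ i → i < m → a (i + 1) = T p q (a i))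
    (hloop : T p q (a m) = a 1)
    (hne : ∃ i ∈ Finset.Icc 1 m, ∃ j ∈ Finset.Icc 1 m, a i ≠ a j)
    (S : ℕ → ℕ)
    (hS : ∀ r, S r = ∑ i ∈ Finset.Icc 1 r, padicValNat 2 (p * a i + q))
    (amin : ℕ)
    (hamin : amin = (Finset.Icc 1 m).inf' (Finset.nonempty_Icc.mpr hm) a) :
    (p : ℝ) ^ m < (2 : ℝ) ^ (S m) ∧
    (2 : ℝ) ^ (S m) < ((p : ℝ) + (q : ℝ) / (amin : ℝ)) ^ m := by
  have hpos : ∀ i ∈ Icc 1 m, 0 < (a i : ℝ) := by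
    intro i hi
    obtain ⟨j, rfl⟩ : ∃ j, i = j + 1 := ⟨i - 1, by grind⟩
    rcases j.eq_zero_or_pos with rfl | hj
    · exact_mod_cast hloop ▸ T_pos hq _
    · exact_mod_cast hstep j hj (by grind) ▸ T_pos hq _
  have hcycle : 2 ^ S m * ∏ i ∈ Icc 1 m, a i = ∏ i ∈ Icc 1 m, (p * a i + q) := by
    rw [hS, ← prod_Icc_eq_of_cycle hm a (fun i => T p q (a i))
      (fun i hi him => (hstep i hi him).symm) hloop]
    exact two_pow_sum_mul_prod_T p q _ a
  have hprod : (2 : ℝ) ^ S m = ∏ i ∈ Icc 1 m, ((p : ℝ) + q / a i) := by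
    rw [prod_add_div_eq _ _ _ fun i hi => (hpos i hi).ne', eq_div_iff (prod_pos hpos).ne']
    exact_mod_cast hcycle
  obtain ⟨i₀, hi₀, hamin_eq⟩ := exists_mem_eq_inf' (nonempty_Icc.mpr hm) a
  have hamin_pos : 0 < (amin : ℝ) := hamin ▸ hamin_eq ▸ hpos i₀ hi₀
  have hcard : (Icc 1 m).card = m := by simp
  have hpR : 0 < (p : ℝ) := by exact_mod_cast hp
  have hqR : 0 < (q : ℝ) := by exact_mod_cast hq
  have hlower := pow_card_lt_prod_add_div (nonempty_Icc.mpr hm) hpR hqR hpos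
  have hupper := prod_add_div_lt_pow_card hpR.le hqR hamin_pos (a := fun i => (a i : ℝ))
    (s := Icc 1 m) (fun i hi => by exact_mod_cast hamin ▸ inf'_le a hi) <| by
      obtain ⟨i, hi, hlt⟩ := exists_inf'_lt_of_ne (nonempty_Icc.mpr hm) hne
      exact ⟨i, hi, by exact_mod_cast hamin ▸ hlt⟩
  rw [hcard] at hlower hupper
  exact hprod ▸ ⟨hlower, hupper⟩

theorem stmt_15 (p q : ℕ) (hp : 0 < p) (hq : 0 < q)
    (hpodd : Odd p) (hqodd : Odd q)
    (m : ℕ) (hm : 1 ≤ m) (a : ℕ → ℕ)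
    (hpos : ∀ i, 1 ≤ i → i ≤ m → 0 < a i)
    (hodd : ∀ i, 1 ≤ i → i ≤ m → Odd (a i))
    (hstep : ∀ i, 1 ≤ i → i < m → a (i + 1) = T p q (a i))
    (hloop : T p q (a m) = a 1)
    (hne : ∃ i ∈ Finset.Icc 1 m, ∃ j ∈ Finset.Icc 1 m, a i ≠ a j)
    (S : ℕ → ℕ)
    (hS : ∀ r, S r = ∑ i ∈ Finset.Icc 1 r, padicValNat 2 (p * a i + q))
    (amin : ℕ)
    (hamin : amin = (Finset.Icc 1 m).inf' (Finset.nonempty_Icc.mpr hm) a) :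
    (p : ℝ) ^ m < (2 : ℝ) ^ (S m) ∧
    (2 : ℝ) ^ (S m) < ((p : ℝ) + (q : ℝ) / (amin : ℝ)) ^ m :=
  stmt_15_general p q hp hq m hm a hstep hloop hne S hS amin hamin
end

section
/- Let p and q be odd positive integers. If a_1, …, a_m is a cycle of T_{p,q} of length m in which not all the a_i are equal, then a_min < q/(p·(2^{(1 − fract(m·log₂ p))/m} − 1)), where fract denotes the fractional part. -/
open Finset Real

theorem T_mul_two_pow (p q x : ℕ) :
    T p q x * 2 ^ padicValNat 2 (p * x + q) = p * x + q :=
  Nat.div_mul_cancel pow_padicValNat_dvd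

def cycleSucc (m i : ℕ) : ℕ := if i = m then 1 else i + 1

theorem prod_Icc_comp_cycleSucc {M : Type*} [CommMonoid M] (m : ℕ) (f : ℕ → M) :
    ∏ i ∈ Icc 1 m, f (cycleSucc m i) = ∏ i ∈ Icc 1 m, f i :=
  prod_nbij' (cycleSucc m) (fun i => if i = 1 then m else i - 1)
    (fun i hi => by simp only [mem_Icc, cycleSucc] at hi ⊢; split_ifs <;> omega)
    (fun i hi => by simp only [mem_Icc] at hi ⊢; split_ifs <;> omega)
    (fun i hi => by simp only [mem_Icc, cycleSucc] at hi ⊢; split_ifs <;> omega)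
    (fun i hi => by simp only [mem_Icc, cycleSucc] at hi ⊢; split_ifs <;> omega)
    (fun _ _ => rfl)

theorem prod_mul_two_pow_eq_of_cycle {p q m : ℕ} {a : ℕ → ℕ}
    (hstep : ∀ i ∈ Icc 1 m, a (cycleSucc m i) = T p q (a i)) :
    (∏ i ∈ Icc 1 m, a i) * 2 ^ (∑ i ∈ Icc 1 m, padicValNat 2 (p * a i + q)) =
      ∏ i ∈ Icc 1 m, (p * a i + q) := by
  rw [← prod_Icc_comp_cycleSucc m a, ← prod_pow_eq_pow_sum, ← prod_mul_distrib]
  exact prod_congr rfl fun i hi => by rw [hstep i hi, T_mul_two_pow]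

theorem Finset.exists_inf'_lt {ι α : Type*} [LinearOrder α] {s : Finset ι} (hs : s.Nonempty)
    {f : ι → α} {i j : ι} (hi : i ∈ s) (hj : j ∈ s) (hij : f i ≠ f j) :
    ∃ k ∈ s, s.inf' hs f < f k := by
  rcases hij.lt_or_gt with h | h
  · exact ⟨j, hj, (inf'_le f hi).trans_lt h⟩
  · exact ⟨i, hi, (inf'_le f hj).trans_lt h⟩

section Bounds

variable {ι : Type*} {s : Finset ι} {x : ι → ℝ} {p q : ℝ}

theorem pow_card_mul_prod_lt_prod_mul_add (hs : s.Nonempty) (hx : ∀ i ∈ s, 0 < x i)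
    (hp : 0 < p) (hq : 0 < q) :
    p ^ #s * ∏ i ∈ s, x i < ∏ i ∈ s, (p * x i + q) := by
  rw [← prod_const, ← prod_mul_distrib]
  exact prod_lt_prod_of_nonempty (fun i hi => mul_pos hp (hx i hi))
    (fun _ _ => lt_add_of_pos_right _ hq) hs

theorem prod_mul_add_lt_pow_card_mul_prod {μ : ℝ} (hμ : 0 < μ) (hx : ∀ i ∈ s, μ ≤ x i)
    (hlt : ∃ i ∈ s, μ < x i) (hp : 0 ≤ p) (hq : 0 < q) :
    ∏ i ∈ s, (p * x i + q) < (p + q / μ) ^ #s * ∏ i ∈ s, x i := by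
  have key : ∀ i, p * x i + q - (p + q / μ) * x i = q / μ * (μ - x i) := fun i => by
    field_simp; ring
  rw [← prod_const, ← prod_mul_distrib]
  refine prod_lt_prod (fun i hi => by nlinarith [hx i hi]) (fun i hi => ?_) ?_
  · have := key i
    nlinarith [hx i hi, div_pos hq hμ]
  · obtain ⟨i, hi, hμi⟩ := hlt
    refine ⟨i, hi, ?_⟩
    have := key i
    nlinarith [div_pos hq hμ]

theorem pow_card_lt_two_pow_lt_of_prod_mul_eq {μ : ℝ} {V : ℕ} (hs : s.Nonempty) (hμ : 0 < μ)
    (hx : ∀ i ∈ s, μ ≤ x i) (hlt : ∃ i ∈ s, μ < x i) (hp : 0 < p) (hq : 0 < q)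
    (h : (∏ i ∈ s, x i) * 2 ^ V = ∏ i ∈ s, (p * x i + q)) :
    p ^ #s < 2 ^ V ∧ 2 ^ V < (p + q / μ) ^ #s := by
  have hx₀ : ∀ i ∈ s, 0 < x i := fun i hi => hμ.trans_le (hx i hi)
  have hprod : 0 ≤ ∏ i ∈ s, x i := (prod_pos hx₀).le
  rw [mul_comm] at h
  constructor
  · refine lt_of_mul_lt_mul_right ?_ hprod
    rw [h]
    exact pow_card_mul_prod_lt_prod_mul_add hs hx₀ hp hq
  · refine lt_of_mul_lt_mul_right ?_ hprod
    rw [h]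
    exact prod_mul_add_lt_pow_card_mul_prod hμ hx hlt hp.le hq

end Bounds

theorem mul_two_rpow_le_of_pow_lt_two_pow {p : ℝ} (hp : 0 < p) {m V : ℕ} (hm : 0 < m)
    (h : p ^ m < 2 ^ V) :
    p * 2 ^ ((1 - Int.fract (m * logb 2 p)) / m) ≤ 2 ^ ((V : ℝ) / m) := by
  set L := (m : ℝ) * logb 2 p with hL
  have hLV : L < V := by
    have := logb_lt_logb one_lt_two (by positivity) h
    rwa [logb_pow, logb_pow, logb_self_eq_one one_lt_two, mul_one] at this
  have hfloor : (⌊L⌋ : ℝ) + 1 ≤ V := by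
    exact_mod_cast Int.floor_lt.mpr (by exact_mod_cast hLV)
  have hexp : logb 2 p + (1 - Int.fract L) / m = (⌊L⌋ + 1) / m := by
    have := Int.floor_add_fract L
    field_simp
    linarith
  calc p * (2 : ℝ) ^ ((1 - Int.fract L) / m)
      = 2 ^ (logb 2 p + (1 - Int.fract L) / m) := by
        rw [rpow_add two_pos, rpow_logb two_pos (by norm_num) hp]
    _ ≤ 2 ^ ((V : ℝ) / m) := by
        rw [hexp]
        gcongr
        norm_num

theorem two_rpow_div_lt_of_two_pow_lt {B : ℝ} (hB : 0 ≤ B) {m V : ℕ} (hm : 0 < m)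
    (h : 2 ^ V < B ^ m) :
    (2 : ℝ) ^ ((V : ℝ) / m) < B := by
  refine lt_of_pow_lt_pow_left₀ m hB ?_
  rwa [← rpow_natCast _ m, ← rpow_mul zero_le_two, div_mul_cancel₀ _ (by positivity),
    rpow_natCast]

theorem lt_div_of_pow_lt_two_pow_lt {p q μ : ℝ} (hp : 0 < p) (hq : 0 < q) (hμ : 0 < μ)
    {m V : ℕ} (hm : 0 < m) (hlow : p ^ m < 2 ^ V) (hupp : 2 ^ V < (p + q / μ) ^ m) :
    μ < q / (p * (2 ^ ((1 - Int.fract (m * logb 2 p)) / m) - 1)) := by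
  set c := (1 - Int.fract (m * logb 2 p)) / m
  have hc : 1 < (2 : ℝ) ^ c :=
    one_lt_rpow one_lt_two (div_pos (by linarith [Int.fract_lt_one (m * logb 2 p)]) (by positivity))
  have key : p * 2 ^ c < p + q / μ :=
    (mul_two_rpow_le_of_pow_lt_two_pow hp hm hlow).trans_lt
      (two_rpow_div_lt_of_two_pow_lt (by positivity) hm hupp)
  rw [lt_div_iff₀ (mul_pos hp (by linarith))]
  have := (lt_div_iff₀ hμ).mp (by linarith : p * (2 ^ c - 1) < q / μ)
  linarith

theorem stmt_17_general (p q : ℕ) (hp : 0 < p) (hq : 0 < q)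
    (m : ℕ) (hm : 1 ≤ m) (a : ℕ → ℕ)
    (hpos : ∀ i, 1 ≤ i → i ≤ m → 0 < a i)
    (hstep : ∀ i, 1 ≤ i → i < m → a (i + 1) = T p q (a i))
    (hloop : T p q (a m) = a 1)
    (hne : ∃ i ∈ Finset.Icc 1 m, ∃ j ∈ Finset.Icc 1 m, a i ≠ a j)
    (amin : ℕ)
    (hamin : amin = (Finset.Icc 1 m).inf' (Finset.nonempty_Icc.mpr hm) a) :
    (amin : ℝ) < (q : ℝ) / ((p : ℝ) * ((2 : ℝ)
      ^ ((1 - Int.fract ((m : ℝ) * Real.logb 2 (p : ℝ))) / (m : ℝ)) - 1)) := by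
  have hcycle : ∀ i ∈ Icc 1 m, a (cycleSucc m i) = T p q (a i) := fun i hi => by
    obtain ⟨h1, h2⟩ := mem_Icc.mp hi
    unfold cycleSucc
    split_ifs with him
    · rw [him, hloop]
    · exact hstep i h1 (lt_of_le_of_ne h2 him)
  have hs : (Icc 1 m).Nonempty := nonempty_Icc.mpr hm
  obtain ⟨k, hk, hak⟩ := exists_mem_eq_inf' hs a
  have hμ : (0 : ℝ) < amin := by
    rw [hamin, hak]
    exact_mod_cast hpos k (mem_Icc.mp hk).1 (mem_Icc.mp hk).2
  obtain ⟨i, hi, j, hj, hij⟩ := hne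
  obtain ⟨l, hl, hlt⟩ := exists_inf'_lt hs hi hj hij
  have hidentity := congrArg (Nat.cast : ℕ → ℝ) (prod_mul_two_pow_eq_of_cycle hcycle)
  push_cast at hidentity
  obtain ⟨hlow, hupp⟩ := pow_card_lt_two_pow_lt_of_prod_mul_eq hs hμ
    (fun i hi => by rw [hamin]; exact_mod_cast inf'_le a hi)
    ⟨l, hl, by rw [hamin]; exact_mod_cast hlt⟩ (by exact_mod_cast hp) (by exact_mod_cast hq)
    hidentity
  rw [Nat.card_Icc, Nat.add_sub_cancel] at hlow hupp
  exact lt_div_of_pow_lt_two_pow_lt (by exact_mod_cast hp) (by exact_mod_cast hq) hμ hm hlow hupp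

theorem stmt_17 (p q : ℕ) (hp : 0 < p) (hq : 0 < q)
    (hpodd : Odd p) (hqodd : Odd q)
    (m : ℕ) (hm : 1 ≤ m) (a : ℕ → ℕ)
    (hpos : ∀ i, 1 ≤ i → i ≤ m → 0 < a i)
    (hodd : ∀ i, 1 ≤ i → i ≤ m → Odd (a i))
    (hstep : ∀ i, 1 ≤ i → i < m → a (i + 1) = T p q (a i))
    (hloop : T p q (a m) = a 1)
    (hne : ∃ i ∈ Finset.Icc 1 m, ∃ j ∈ Finset.Icc 1 m, a i ≠ a j)
    (amin : ℕ)
    (hamin : amin = (Finset.Icc 1 m).inf' (Finset.nonempty_Icc.mpr hm) a) :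
    (amin : ℝ) < (q : ℝ) / ((p : ℝ) * ((2 : ℝ)
      ^ ((1 - Int.fract ((m : ℝ) * Real.logb 2 (p : ℝ))) / (m : ℝ)) - 1)) :=
  stmt_17_general p q hp hq m hm a hpos hstep hloop hne amin hamin
end
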